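/- arXiv:2603.16071 — 2 statements merged into one kernel-verified Lean document; each statement's English description precedes it below -/
import Mathlib

section
/- Let Φ_a = ⟨φ_1, Tcf_{i_0}, Tcf_{i_1}, Tcf_{i_2}, φ_2, Tcf_{i_3}, Tcf_{i_4}, φ_3⟩ and Φ_b = ⟨φ_1, Tcf_{i_0}, Tcf_{i_2}, φ_2, Tcf_{i_3}, Tcf_{i_1}, Tcf_{i_4}, φ_3⟩ be two orderings of the same aircraft, where the subsequences φ_1, φ_2, φ_3 contain m_1, m_2, m_3 aircraft respectively. Suppose that in both Φ_a and Φ_b each aircraft other than the first is relevant to its leading aircraft, the first aircraft is the same and operates at the same time in both sequences, P_i > t_0 for all i, and every aircraft is delayed in both sequences: S_i(Φ_a) > P_i and S_i(Φ_b) > P_i for all i. Let D_1 = Y_{i_0 i_1} + Y_{i_1 i_2} − Y_{i_0 i_2} and D_2 = Y_{i_0 i_1} + Y_{i_1 i_2} + Y_{i_3 i_4} − Y_{i_0 i_2} − Y_{i_3 i_1} − Y_{i_1 i_4}. If D_2 = 0 and D_1·(m_2 + 2) ≤ S_{i_1}(Φ_b) − S_{i_1}(Φ_a), then F(Φ_a)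 − F(Φ_b) ≤ 0. -/
/-!
In both sequences every aircraft is delayed, so the delay sums are linear in the operation
times, and since `Φa` and `Φb` contain the same aircraft, `F(Φa) - F(Φb)` is the sum of the
time differences `Sa x - Sb x`. Along a block of consecutive aircraft that is common to both
sequences these differences are constant, since each time is its predecessor's plus the same
separation. They vanish on `φ1 ++ [i0]` (both sequences start together), equal `D1` on
`i2 :: φ2 ++ [i3]`, and vanish again on `i4 :: φ3` because `D2 = 0`.
Hence `F(Φa) - F(Φb) = D1 (m2 + 2) - (Sb i1 - Sa i1) ≤ 0`.
-/

noncomputable section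

/-- Total delay of the aircraft in the list `l` (an ordering of the aircraft),
where `S x` is the rescheduled operation time of aircraft `x` in this sequence and
`P x` is its scheduled operation time: `F(φ) = Σ_i max (S_i - P_i) 0`. -/
def totalDelay (S P : ℕ → ℝ) (l : List ℕ) : ℝ :=
  (l.map (fun x => max (S x - P x) 0)).sum

theorem List.IsChain.sub_eq_of_head {α G : Type*} [AddCommGroup G] {Y : α → α → G}
    {S S' : α → G} {c : G} {l : List α}
    (h : l.IsChain fun k m => S m = S k + Y k m) (h' : l.IsChain fun k m => S' m = S' k + Y k m)
    (hhead : ∀ z ∈ l.head?, S z - S' z = c) : ∀ x ∈ l, S x - S' x = c := by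
  have hboth : l.IsChain fun k m => S m = S k + Y k m ∧ S' m = S' k + Y k m :=
    List.isChain_iff_forall_rel_of_append_cons_cons.2 fun _ _ _ _ hl =>
      ⟨List.isChain_iff_forall_rel_of_append_cons_cons.1 h hl,
        List.isChain_iff_forall_rel_of_append_cons_cons.1 h' hl⟩
  refine hboth.induction _ _ (fun x y hxy hx => ?_) fun hne => hhead _ (List.head?_eq_some_head hne)
  rw [hxy.1, hxy.2, add_sub_add_right_eq_sub, hx]

theorem List.sum_map_sub {α G : Type*} [AddCommGroup G] (l : List α) (f g : α → G) :
    (l.map fun x => f x - g x).sum = (l.map f).sum - (l.map g).sum :=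
  l.sum_hom₂ (· - ·) add_sub_add_comm (sub_self 0) f g

theorem List.sum_map_eq_length_nsmul {α M : Type*} [AddMonoid M] {l : List α} {f : α → M}
    {c : M} (h : ∀ x ∈ l, f x = c) : (l.map f).sum = l.length • c := by
  rw [List.sum_eq_card_nsmul _ c (List.forall_mem_map.2 h), List.length_map]

theorem List.sum_map_append_cons_append {α M : Type*} [AddMonoid M] {L K R : List α}
    {f : α → M} {a : α} {c : M} (hL : ∀ x ∈ L, f x = 0) (hK : ∀ x ∈ K, f x = c)
    (hR : ∀ x ∈ R, f x = 0) : ((L ++ a :: K ++ R).map f).sum = f a + K.length • c := by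
  rw [List.map_append, List.map_append, List.sum_append, List.sum_append, List.map_cons,
    List.sum_cons, List.sum_map_eq_length_nsmul hL, List.sum_map_eq_length_nsmul hK,
    List.sum_map_eq_length_nsmul hR, smul_zero, smul_zero, zero_add, add_zero]

theorem totalDelay_perm {S P : ℕ → ℝ} {l₁ l₂ : List ℕ} (h : l₁.Perm l₂) :
    totalDelay S P l₁ = totalDelay S P l₂ :=
  (h.map _).sum_eq

theorem totalDelay_eq_sum_sub {S P : ℕ → ℝ} {l : List ℕ} (h : ∀ x ∈ l, P x ≤ S x) :
    totalDelay S P l = (l.map fun x => S x - P x).sum :=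
  congrArg _ <| List.map_congr_left fun x hx => max_eq_left (sub_nonneg.2 (h x hx))

theorem totalDelay_sub_totalDelay_of_perm {P Sa Sb : ℕ → ℝ} {la lb : List ℕ} (hperm : la.Perm lb)
    (ha : ∀ x ∈ la, P x ≤ Sa x) (hb : ∀ x ∈ lb, P x ≤ Sb x) :
    totalDelay Sa P la - totalDelay Sb P lb = (la.map fun x => Sa x - Sb x).sum := by
  rw [← totalDelay_perm hperm, totalDelay_eq_sum_sub ha,
    totalDelay_eq_sum_sub fun x hx => hb x (hperm.subset hx), ← List.sum_map_sub]
  simp only [sub_sub_sub_cancel_right]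

theorem delay_nonincrease_after_moving_one_aircraft_general
    (Y : ℕ → ℕ → ℝ) (P Sa Sb : ℕ → ℝ)
    (φ1 φ2 φ3 : List ℕ) (i0 i1 i2 i3 i4 : ℕ)
    (Φa Φb : List ℕ)
    (hΦa : Φa = φ1 ++ [i0, i1, i2] ++ φ2 ++ [i3, i4] ++ φ3)
    (hΦb : Φb = φ1 ++ [i0, i2] ++ φ2 ++ [i3, i1, i4] ++ φ3)
    (hchaina : Φa.Chain' (fun k l => Sa l = Sa k + Y k l))
    (hchainb : Φb.Chain' (fun k l => Sb l = Sb k + Y k l))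
    (hfirst : ∀ z, Φa.head? = some z → Sa z = Sb z)
    (hdelaya : ∀ z ∈ Φa, P z < Sa z)
    (hdelayb : ∀ z ∈ Φb, P z < Sb z)
    (hD2 : Y i0 i1 + Y i1 i2 + Y i3 i4 - Y i0 i2 - Y i3 i1 - Y i1 i4 = 0)
    (hD1 : (Y i0 i1 + Y i1 i2 - Y i0 i2) * ((φ2.length : ℝ) + 2) ≤ Sb i1 - Sa i1) :
    totalDelay Sa P Φa - totalDelay Sb P Φb ≤ 0 := by
  subst hΦa hΦb
  have hperm : (φ1 ++ [i0, i1, i2] ++ φ2 ++ [i3, i4] ++ φ3).Perm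
      (φ1 ++ [i0, i2] ++ φ2 ++ [i3, i1, i4] ++ φ3) := by
    simpa using ((List.perm_middle (l₁ := i2 :: φ2 ++ [i3]) (l₂ := i4 :: φ3) (a := i1)).symm.cons
      i0).append_left φ1
  rw [totalDelay_sub_totalDelay_of_perm hperm (fun x hx => (hdelaya x hx).le)
    (fun x hx => (hdelayb x hx).le)]
  simp only [List.Chain', List.append_assoc, List.cons_append, List.nil_append,
    List.isChain_append_cons_cons, List.isChain_cons_cons, List.isChain_cons_append_cons_cons]
    at hchaina hchainb hfirst
  obtain ⟨hLa, h01, h12, hMa, h34, hRa⟩ := hchaina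
  obtain ⟨hLb, h02, hMb, h31, h14, hRb⟩ := hchainb
  have hL : ∀ x ∈ φ1 ++ [i0], Sa x - Sb x = 0 :=
    hLa.sub_eq_of_head hLb fun z hz => sub_eq_zero.2 <| hfirst z <| by
      cases φ1 <;> simpa using hz
  have hM : ∀ x ∈ i2 :: (φ2 ++ [i3]), Sa x - Sb x = Y i0 i1 + Y i1 i2 - Y i0 i2 :=
    hMa.sub_eq_of_head hMb <| by rintro _ ⟨⟩; linarith [hL i0 (by simp)]
  have hR : ∀ x ∈ i4 :: φ3, Sa x - Sb x = 0 :=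
    hRa.sub_eq_of_head hRb <| by rintro _ ⟨⟩; linarith [hM i3 (by simp)]
  have hsplit : φ1 ++ [i0, i1, i2] ++ φ2 ++ [i3, i4] ++ φ3 =
      (φ1 ++ [i0]) ++ i1 :: (i2 :: (φ2 ++ [i3])) ++ i4 :: φ3 := by
    simp
  rw [hsplit, List.sum_map_append_cons_append hL hM hR]
  simp only [List.length_cons, List.length_append, List.length_nil, nsmul_eq_mul]
  push_cast
  linarith

/-- Theorem 3(2) of the paper.  In the setting of Theorem 3(1), with
`D1 = Y i0 i1 + Y i1 i2 − Y i0 i2` and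
`D2 = Y i0 i1 + Y i1 i2 + Y i3 i4 − Y i0 i2 − Y i3 i1 − Y i1 i4`:
if `D2 = 0` and `D1·(m2+2) ≤ S_{i1}(Φb) − S_{i1}(Φa)`, then `F(Φa) − F(Φb) ≤ 0`. -/
theorem delay_nonincrease_after_moving_one_aircraft
    (Y : ℕ → ℕ → ℝ) (P Sa Sb : ℕ → ℝ) (t0 : ℝ)
    (φ1 φ2 φ3 : List ℕ) (i0 i1 i2 i3 i4 : ℕ)
    (Φa Φb : List ℕ)
    (hΦa : Φa = φ1 ++ [i0, i1, i2] ++ φ2 ++ [i3, i4] ++ φ3)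
    (hΦb : Φb = φ1 ++ [i0, i2] ++ φ2 ++ [i3, i1, i4] ++ φ3)
    (hnodup : Φa.Nodup)
    (hchaina : Φa.Chain' (fun k l => Sa l = Sa k + Y k l))
    (hchainb : Φb.Chain' (fun k l => Sb l = Sb k + Y k l))
    (hfirst : ∀ z, Φa.head? = some z → Sa z = Sb z)
    (hP : ∀ z ∈ Φa, t0 < P z)
    (hdelaya : ∀ z ∈ Φa, P z < Sa z)
    (hdelayb : ∀ z ∈ Φb, P z < Sb z)
    (hD2 : Y i0 i1 + Y i1 i2 + Y i3 i4 - Y i0 i2 - Y i3 i1 - Y i1 i4 = 0)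
    (hD1 : (Y i0 i1 + Y i1 i2 - Y i0 i2) * ((φ2.length : ℝ) + 2) ≤ Sb i1 - Sa i1) :
    totalDelay Sa P Φa - totalDelay Sb P Φb ≤ 0 :=
  delay_nonincrease_after_moving_one_aircraft_general Y P Sa Sb φ1 φ2 φ3 i0 i1 i2 i3 i4 Φa Φb hΦa
    hΦb hchaina hchainb hfirst hdelaya hdelayb hD2 hD1
end
end

section
/- Let Φ_a = ⟨φ_1, φ_2⟩ be a landing sequence, where φ_1 = ⟨Tcf_1, …, Tcf_{n_1}⟩ and φ_2 = ⟨Tcf_{n_1+1}, …, Tcf_{n_2}⟩ are both class-monotonically-decreasing and cl_{n_1} < cl_{n_1+1}. Let Φ_b be a class-monotonically-decreasing sequence obtained by merging the aircraft of φ_1 and φ_2. Suppose that in both Φ_a and Φ_b each aircraft other than the first is relevant to its leading aircraft, the first aircraft of each sequence operates at the same initial time t_0, and every aircraft is delayed in both sequences: S_i(Φ_a) > P_i > 0 and S_i(Φ_b) > P_i > 0 for all i. If cl_{n_1} = ρ_2 − 1, cl_{n_1+1} = ρ_2, and cl_i = ρ_2 for some i ∈ {1, …, n_1−1}, then F(Φ_a)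 < F(Φ_b). -/
/-! If every aircraft trails its leader at minimum separation from the common start `t₀`, the
operation times of a sequence with classes `c₀, …, cₙ` add up to
`(n + 1) t₀ + Σₖ (n - k) T(cₖ, cₖ₊₁)`: the gap in front of position `k + 1` is passed on to the
`n - k` aircraft from there on. As every aircraft is delayed, the total delay is this sum minus
`Σ P`, so only the weighted separation costs of the two class sequences have to be compared.

Both class sequences begin with the same block of classes `≥ 6`, followed by tails of equal
length starting with class `5`: `5^p 4^q 5^r R` in `Φa` and `5^(p+r) 4^q R` in `Φb`, with all
classes of `R` at most `4`. Within the tails every gap costs `T₀` except the `5 → 5` and `4 → 5`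
gaps, which cost `T₀ + δ`. Both tails have `p + r - 1` expensive gaps, but in `Φb` the last `r`
of them come `q` positions earlier and so weigh `q` more each: `F(Φb) - F(Φa) = q r δ > 0`. -/

noncomputable section

/-- The paper's landing separation assumptions (Assumptions 1-4), with classes `1,…,η`,
`ρ₁ = 3`, `ρ₂ = 5`: `T i j` is the minimum landing separation time between a leading
aircraft of class `i` and a trailing aircraft of class `j`. -/
structure LandingAssumptions (η : ℕ) (T : ℕ → ℕ → ℝ) (T0 δ : ℝ) : Prop where
  T0_pos : 0 < T0
  delta_lb : T0 / 8 < δ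
  delta_ub : δ < T0 / 6
  eta_ge : 6 ≤ η
  diag12 : ∀ i, i = 1 ∨ i = 2 → T i i = 1.5 * T0
  diag35 : ∀ i, i = 3 ∨ i = 5 → T i i = T0 + δ
  diag_other : ∀ i, 1 ≤ i → i ≤ η → i ≠ 1 → i ≠ 2 → i ≠ 3 → i ≠ 5 → T i i = T0
  T21 : T 2 1 = 1.5 * T0
  lower : ∀ i j, 1 ≤ j → j < i → i ≤ η → i ≠ 2 → T i j = T0
  mono : ∀ i k j, 1 ≤ i → i < k → k < j → j ≤ η →
    T i k ≤ T i j ∧ T i j ≤ 3 * T0 ∧ T k j < T i j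
  tri : ∀ k j i, 1 ≤ k → k ≤ j → j ≤ i → i ≤ η →
    T i k < T i j + T j k ∧ T k i < T j i + T k j
  succ45 : T 4 5 = T0 + δ
  succ_other : ∀ k, 2 ≤ k → k ≤ η → k ≠ 5 → 1.5 * T0 ≤ T (k - 1) k
  dec : ∀ i k, 2 ≤ i → i ≤ k → k ≤ η → ¬(i = 5 ∧ k = 5) → 2 * δ < T (i - 1) k - T i k
  T12 : 2 * T0 < T 1 2
  T23 : 1.5 * T0 + 2 * δ < T 2 3
  row1 : ∀ h j, 3 ≤ h → h ≤ j → j ≤ η → 0.5 * T0 < T 1 j - T h j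
  row2E1 : 0.5 * T0 - δ ≤ T 2 4 - T 3 4 ∧ T 2 4 - T 3 4 < 0.5 * T0
  row2E2 : 0.5 * T0 - δ ≤ T 2 η - T 3 η ∧ T 2 η - T 3 η < 0.5 * T0
  row2notE : ∀ k j, 2 < k → k < j → j ≤ η → ¬(k = 3 ∧ j = 4) → ¬(k = 3 ∧ j = η) →
    0.5 * T0 < T 2 j - T k j

open List

namespace List

section LinearOrder

variable {α : Type*} [LinearOrder α]

theorem eq_filter_append_replicate_append_filter {l : List α} (hl : l.Pairwise (· ≥ ·))
    (k : α) : l = l.filter (k < ·) ++ replicate (l.count k) k ++ l.filter (· < k) := by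
  refine Perm.eq_of_pairwise' hl ?_ (perm_iff_count.mpr fun a => ?_)
  · simp only [pairwise_append, pairwise_replicate, mem_append, mem_replicate, mem_filter,
      decide_eq_true_eq]
    refine ⟨⟨hl.filter _, by simp, ?_⟩, hl.filter _, ?_⟩ <;> grind
  · rcases lt_trichotomy k a with h | rfl | h
    · simp [count_filter, h, count_replicate, h.ne, count_eq_zero, h.not_gt]
    · have hgt : count k (l.filter (k < ·)) = 0 := count_eq_zero.mpr (by simp)
      have hlt : count k (l.filter (· < k)) = 0 := count_eq_zero.mpr (by simp)
      simp [hgt, hlt]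
    · simp [count_filter, h, count_replicate, h.ne', count_eq_zero, h.not_gt]

theorem eq_replicate_append_filter_of_head?_eq {l : List α} (hl : l.Pairwise (· ≥ ·)) {k : α}
    (hk : l.head? = some k) : l = replicate (l.count k) k ++ l.filter (· < k) := by
  have hle : ∀ c ∈ l, c ≤ k := by
    obtain ⟨l', rfl⟩ := head?_eq_some_iff.mp hk
    intro c hc
    rcases mem_cons.mp hc with rfl | hc
    · rfl
    · exact (pairwise_cons.mp hl).1 c hc
  have hgt : l.filter (k < ·) = [] := filter_eq_nil_iff.mpr fun c hc => by simpa using hle c hc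
  simpa [hgt] using eq_filter_append_replicate_append_filter hl k

theorem eq_append_replicate_of_perm {A R l : List α} {x y : α} {p q r : ℕ}
    (hA : A.Pairwise (· ≥ ·)) (hAx : ∀ a ∈ A, x < a) (hyx : y < x)
    (hR : R.Pairwise (· ≥ ·)) (hRy : ∀ d ∈ R, d ≤ y) (hl : l.Pairwise (· ≥ ·))
    (hperm : l ~ A ++ replicate p x ++ replicate q y ++ (replicate r x ++ R)) :
    l = A ++ replicate (p + r) x ++ replicate q y ++ R := by
  refine Perm.eq_of_pairwise' hl ?_ (hperm.trans ?_)
  · simp only [pairwise_append, pairwise_replicate, mem_append, mem_replicate]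
    grind
  · simp only [replicate_add, append_assoc]
    exact ((perm_append_comm_assoc _ _ _).append_left _).append_left _

end LinearOrder

theorem eq_filter_append_replicate_append_replicate_of_getLast?_eq {l : List ℕ}
    (hl : l.Pairwise (· ≥ ·)) {k : ℕ} (hk : l.getLast? = some k) :
    l = l.filter (k + 1 < ·) ++ replicate (l.count (k + 1)) (k + 1)
      ++ replicate (l.count k) k := by
  have hge : ∀ c ∈ l, k ≤ c := by
    obtain ⟨l', rfl⟩ := getLast?_eq_some_iff.mp hk
    intro c hc
    rcases mem_append.mp hc with hc | hc
    · exact (pairwise_append.mp hl).2.2 c hc k (mem_singleton_self k)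
    · rw [mem_singleton.mp hc]
  have hlow : l.filter (· < k + 1) = l.filter (· = k) :=
    filter_congr fun c hc => by have := hge c hc; grind
  rw [← filter_eq k, ← hlow]
  exact eq_filter_append_replicate_append_filter hl (k + 1)

end List

theorem totalDelay_eq_sum_sub_sum {S P : ℕ → ℝ} {l : List ℕ} (hP : ∀ z ∈ l, P z ≤ S z) :
    totalDelay S P l = (l.map S).sum - (l.map P).sum := by
  induction l with
  | nil => simp [totalDelay]
  | cons x l ih =>
    simp only [totalDelay, mem_cons, forall_eq_or_imp] at hP ih ⊢
    simp only [map_cons, sum_cons, max_eq_left (sub_nonneg.2 hP.1), ih hP.2]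
    ring

def separationCost (T : ℕ → ℕ → ℝ) : List ℕ → ℝ
  | x :: y :: r => ((r.length : ℝ) + 1) * T x y + separationCost T (y :: r)
  | _ => 0

section separationCost

variable {T : ℕ → ℕ → ℝ}

theorem separationCost_cons (x : ℕ) (l : List ℕ) :
    separationCost T (x :: l) = l.length * T x l.headI + separationCost T l := by
  cases l with
  | nil => simp [separationCost]
  | cons y r => simp [separationCost]

theorem sum_map_eq_of_isChain {cl : ℕ → ℕ} {S : ℕ → ℝ} :
    ∀ (l : List ℕ) (t : ℝ), l.IsChain (fun u v => S v = S u + T (cl u) (cl v)) →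
      (∀ z, l.head? = some z → S z = t) →
      (l.map S).sum = l.length * t + separationCost T (l.map cl)
  | [], _, _, _ => by simp [separationCost]
  | [x], _, _, hS => by simp [separationCost, hS x rfl]
  | x :: y :: r, t, hc, hS => by
    rw [isChain_cons_cons] at hc
    have ih := sum_map_eq_of_isChain (y :: r) (t + T (cl x) (cl y)) hc.2
      (by rintro z ⟨⟩; rw [hc.1, hS x rfl])
    simp only [map_cons, sum_cons] at ih ⊢
    rw [hS x rfl, ih, separationCost]
    simp only [length_cons, length_map, Nat.cast_add, Nat.cast_one]
    ring

theorem totalDelay_eq_of_isChain {cl : ℕ → ℕ} {S P : ℕ → ℝ} {l : List ℕ} {t : ℝ}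
    (hc : l.IsChain (fun u v => S v = S u + T (cl u) (cl v)))
    (hS : ∀ z, l.head? = some z → S z = t) (hP : ∀ z ∈ l, P z ≤ S z) :
    totalDelay S P l = l.length * t + separationCost T (l.map cl) - (l.map P).sum := by
  rw [totalDelay_eq_sum_sub_sum hP, sum_map_eq_of_isChain l t hc hS]

theorem separationCost_replicate_append (c j : ℕ) (l : List ℕ) :
    separationCost T (replicate (j + 1) c ++ l) =
      (j * l.length + j * (j + 1) / 2) * T c c + l.length * T c l.headI
        + separationCost T l := by
  induction j with
  | zero => simp [separationCost_cons]
  | succ j ih =>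
    rw [replicate_succ, cons_append, separationCost_cons, ih]
    simp only [replicate_succ, cons_append, headI_cons, length_cons, length_append,
      length_replicate, Nat.cast_add, Nat.cast_one]
    ring

theorem separationCost_append_lt_append {l₁ l₂ : List ℕ} (hlen : l₁.length = l₂.length)
    (hhead : l₁.headI = l₂.headI) (hlt : separationCost T l₁ < separationCost T l₂) :
    ∀ A : List ℕ, separationCost T (A ++ l₁) < separationCost T (A ++ l₂)
  | [] => hlt
  | a :: A => by
    have hhead' : (A ++ l₁).headI = (A ++ l₂).headI := by cases A <;> simp [hhead]
    simp only [cons_append, separationCost_cons, length_append, hlen, hhead']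
    linarith [separationCost_append_lt_append hlen hhead hlt A]

theorem separationCost_split_lt_merged {x y : ℕ} (hyx : T y x = T x x) (hxy : T x y = T y y)
    (hlt : T y y < T x x) {R : List ℕ} (hR : ∀ d ∈ R.head?, T x d = T y d) {p q r : ℕ}
    (hp : 0 < p) (hq : 0 < q) (hr : 0 < r) :
    separationCost T (replicate p x ++ replicate q y ++ (replicate r x ++ R))
      < separationCost T (replicate (p + r) x ++ replicate q y ++ R) := by
  obtain ⟨a, rfl⟩ := Nat.exists_eq_add_one_of_ne_zero hp.ne'
  obtain ⟨b, rfl⟩ := Nat.exists_eq_add_one_of_ne_zero hq.ne'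
  obtain ⟨c, rfl⟩ := Nat.exists_eq_add_one_of_ne_zero hr.ne'
  have hRhead : (R.length : ℝ) * T x R.headI = R.length * T y R.headI := by
    cases R with
    | nil => simp
    | cons d R => simp [hR d rfl]
  have hsum : a + 1 + (c + 1) = a + c + 1 + 1 := by omega
  simp only [append_assoc, hsum, separationCost_replicate_append]
  simp only [replicate_succ, cons_append, headI_cons, length_cons, length_append,
    length_replicate, hyx, hxy, hRhead]
  push_cast
  have hgain : 0 < ((b : ℝ) + 1) * (c + 1) * (T x x - T y y) := by
    have := sub_pos.2 hlt
    positivity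
  linarith

end separationCost

namespace LandingAssumptions

variable {η : ℕ} {T : ℕ → ℕ → ℝ} {T0 δ : ℝ}

theorem T_four_four (hL : LandingAssumptions η T T0 δ) : T 4 4 = T0 :=
  hL.diag_other 4 (by norm_num) (by linarith [hL.eta_ge]) (by norm_num) (by norm_num)
    (by norm_num) (by norm_num)

theorem T_five_five (hL : LandingAssumptions η T T0 δ) : T 5 5 = T0 + δ :=
  hL.diag35 5 (Or.inr rfl)

theorem T_five_eq_T_four (hL : LandingAssumptions η T T0 δ) {d : ℕ} (hd1 : 1 ≤ d)
    (hd4 : d ≤ 4) : T 5 d = T 4 d := by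
  have hη := hL.eta_ge
  rcases (show d = 4 ∨ d ≤ 3 by omega) with rfl | hd3
  · rw [hL.lower 5 4 (by norm_num) (by norm_num) (by omega) (by norm_num), hL.T_four_four]
  · rw [hL.lower 5 d hd1 (by omega) (by omega) (by norm_num),
      hL.lower 4 d hd1 (by omega) (by omega) (by norm_num)]

theorem separationCost_append_lt_of_perm (hL : LandingAssumptions η T T0 δ)
    {X₁ X₂ Xb : List ℕ} (h₁ : X₁.Pairwise (· ≥ ·)) (h₂ : X₂.Pairwise (· ≥ ·))
    (hb : Xb.Pairwise (· ≥ ·)) (hperm : Xb ~ X₁ ++ X₂) (hlast : X₁.getLast? = some 4)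
    (h5 : 5 ∈ X₁) (hhead : X₂.head? = some 5) (hpos : ∀ c ∈ X₂, 1 ≤ c) :
    separationCost T (X₁ ++ X₂) < separationCost T Xb := by
  set A := X₁.filter (5 < ·)
  set R := X₂.filter (· < 5)
  set p := X₁.count 5
  set q := X₁.count 4
  set r := X₂.count 5
  have hX₁ : X₁ = A ++ replicate p 5 ++ replicate q 4 :=
    eq_filter_append_replicate_append_replicate_of_getLast?_eq h₁ hlast
  have hX₂ : X₂ = replicate r 5 ++ R := eq_replicate_append_filter_of_head?_eq h₂ hhead
  have hRle : ∀ d ∈ R, d ≤ 4 := fun d hd => by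
    simp only [R, mem_filter, decide_eq_true_eq] at hd
    omega
  have hXb : Xb = A ++ replicate (p + r) 5 ++ replicate q 4 ++ R :=
    eq_append_replicate_of_perm (h₁.filter _) (by simp [A]) (by norm_num) (h₂.filter _) hRle hb
      (hX₁ ▸ hX₂ ▸ hperm)
  have hp : 0 < p := count_pos_iff.mpr h5
  have hR : ∀ d ∈ R.head?, T 5 d = T 4 d := fun d hd =>
    have hdR := mem_of_head? hd
    hL.T_five_eq_T_four (hpos d (mem_of_mem_filter hdR)) (hRle d hdR)
  have hcore := separationCost_split_lt_merged (T := T)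
    (hL.succ45.trans hL.T_five_five.symm)
    (hL.T_five_eq_T_four (by norm_num) le_rfl)
    (by linarith [hL.T_four_four, hL.T_five_five, hL.delta_lb, hL.T0_pos]) hR hp
    (count_pos_iff.mpr (mem_of_getLast? hlast)) (count_pos_iff.mpr (mem_of_head? hhead))
  rw [hXb, hX₁, hX₂]
  simp only [append_assoc] at hcore ⊢
  refine separationCost_append_lt_append ?_ ?_ hcore A
  · simp only [length_append, length_replicate]
    omega
  · obtain ⟨p', hp'⟩ := Nat.exists_eq_add_one_of_ne_zero hp.ne'
    rw [hp', Nat.add_right_comm, replicate_succ, replicate_succ]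
    rfl

end LandingAssumptions

theorem merge_landing_case1_general
    (η : ℕ) (T : ℕ → ℕ → ℝ) (T0 δ t0 : ℝ)
    (hL : LandingAssumptions η T T0 δ)
    (cl : ℕ → ℕ) (P Sa Sb : ℕ → ℝ)
    (Y : ℕ → ℕ → ℝ) (hY : ∀ u v, Y u v = T (cl u) (cl v))
    (φ1 φ2 : List ℕ) (hφ2 : φ2 ≠ [])
    (Φa Φb : List ℕ) (hΦa : Φa = φ1 ++ φ2)
    (hperm : Φb.Perm Φa)
    (hclrange : ∀ z ∈ Φa, 1 ≤ cl z ∧ cl z ≤ η)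
    (hdec1 : φ1.Chain' (fun u v => cl v ≤ cl u))
    (hdec2 : φ2.Chain' (fun u v => cl v ≤ cl u))
    (hdecb : Φb.Chain' (fun u v => cl v ≤ cl u))
    (hchaina : Φa.Chain' (fun u v => Sa v = Sa u + Y u v))
    (hchainb : Φb.Chain' (fun u v => Sb v = Sb u + Y u v))
    (hstarta : ∀ z, Φa.head? = some z → Sa z = t0)
    (hstartb : ∀ z, Φb.head? = some z → Sb z = t0)
    (hdelay : ∀ z ∈ Φa, 0 < P z ∧ P z < Sa z ∧ P z < Sb z)
    (hc1 : cl φ1.getLastI = 4) (hc2 : cl φ2.headI = 5)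
    (hc3 : ∃ z ∈ φ1.dropLast, cl z = 5) :
    totalDelay Sa P Φa < totalDelay Sb P Φb := by
  subst hΦa
  have hφ1 : φ1 ≠ [] := by rintro rfl; simp at hc3
  obtain ⟨z, hz, hz5⟩ := hc3
  have hsorted (l : List ℕ) (h : l.IsChain (fun u v => cl v ≤ cl u)) :
      (l.map cl).Pairwise (· ≥ ·) :=
    isChain_iff_pairwise.mp ((isChain_map cl).mpr h)
  have hlast : (φ1.map cl).getLast? = some 4 := by
    rw [← hc1, getLastI_eq_getLast?_getD, getLast?_map, getLast?_eq_some_getLast hφ1]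
    rfl
  have hhead : (φ2.map cl).head? = some 5 := by
    obtain ⟨w, ws, rfl⟩ := exists_cons_of_ne_nil hφ2
    simpa using hc2
  have hpos : ∀ c ∈ φ2.map cl, 1 ≤ c := by
    simp only [mem_map, forall_exists_index, and_imp, forall_apply_eq_imp_iff₂]
    exact fun w hw => (hclrange w (mem_append_right φ1 hw)).1
  have hcost := hL.separationCost_append_lt_of_perm (hsorted φ1 hdec1) (hsorted φ2 hdec2)
    (hsorted Φb hdecb) (by simpa using hperm.map cl)
    hlast (hz5 ▸ mem_map_of_mem (dropLast_subset φ1 hz)) hhead hpos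
  simp only [hY] at hchaina hchainb
  rw [totalDelay_eq_of_isChain hchaina hstarta (fun z hz => (hdelay z hz).2.1.le),
    totalDelay_eq_of_isChain hchainb hstartb (fun z hz => (hdelay z (hperm.subset hz)).2.2.le),
    hperm.length_eq, (hperm.map P).sum_eq, map_append]
  linarith

/-- Lemma 1(1) of the paper.  `Φa = ⟨φ1, φ2⟩` is a landing sequence where
`φ1` and `φ2` are class-monotonically-decreasing and `cl_{n1} < cl_{n1+1}`; `Φb` is a
class-monotonically-decreasing merge of the same aircraft; in both, each aircraft other
than the first is relevant to its leading aircraft, both start at time `t0`, and every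
aircraft is delayed in both.  If `cl_{n1} = ρ2 − 1 = 4`, `cl_{n1+1} = ρ2 = 5` and some
aircraft among `Tcf_1, …, Tcf_{n1−1}` has class `ρ2 = 5`, then `F(Φa) < F(Φb)`. -/
theorem merge_landing_case1
    (η : ℕ) (T : ℕ → ℕ → ℝ) (T0 δ t0 : ℝ)
    (hL : LandingAssumptions η T T0 δ)
    (cl : ℕ → ℕ) (P Sa Sb : ℕ → ℝ)
    (Y : ℕ → ℕ → ℝ) (hY : ∀ u v, Y u v = T (cl u) (cl v))
    (φ1 φ2 : List ℕ) (hφ1 : φ1 ≠ []) (hφ2 : φ2 ≠ [])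
    (Φa Φb : List ℕ) (hΦa : Φa = φ1 ++ φ2)
    (hperm : Φb.Perm Φa)
    (hnodup : Φa.Nodup)
    (hclrange : ∀ z ∈ Φa, 1 ≤ cl z ∧ cl z ≤ η)
    (hdec1 : φ1.Chain' (fun u v => cl v ≤ cl u))
    (hdec2 : φ2.Chain' (fun u v => cl v ≤ cl u))
    (hbreak : cl φ1.getLastI < cl φ2.headI)
    (hdecb : Φb.Chain' (fun u v => cl v ≤ cl u))
    (hchaina : Φa.Chain' (fun u v => Sa v = Sa u + Y u v))
    (hchainb : Φb.Chain' (fun u v => Sb v = Sb u + Y u v))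
    (hstarta : ∀ z, Φa.head? = some z → Sa z = t0)
    (hstartb : ∀ z, Φb.head? = some z → Sb z = t0)
    (hdelay : ∀ z ∈ Φa, 0 < P z ∧ P z < Sa z ∧ P z < Sb z)
    (hc1 : cl φ1.getLastI = 4) (hc2 : cl φ2.headI = 5)
    (hc3 : ∃ z ∈ φ1.dropLast, cl z = 5) :
    totalDelay Sa P Φa < totalDelay Sb P Φb :=
  merge_landing_case1_general η T T0 δ t0 hL cl P Sa Sb Y hY φ1 φ2 hφ2 Φa Φb hΦa hperm hclrange
    hdec1 hdec2 hdecb hchaina hchainb hstarta hstartb hdelay hc1 hc2 hc3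
end
end
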